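/- Let φ : I → ℝ be smooth, and consider the cylinder S parametrized by Φ(x, z) = (x, φ(z), z) in M_f, with unit normal η = (φ′(z), −ε, 0). Then g_f(∇_{Φ_z} Φ_z, η) = (ε/2) f_y(φ(z), z) − φ″(z). Consequently, S is totally geodesic (i.e. g_f(∇_X Y, η) = 0 for all X, Y in the span of Φ_x, Φ_z) if and only if (ε/2) f_y(φ(z), z) − φ″(z) = 0 for all z ∈ I. -/
import Mathlib


open Matrix

/-- The Walker metric `g_f` of a strict Walker 3-manifold at a point `(x, y, z)`. -/
noncomputable def gf (ε : ℝ) (f : ℝ → ℝ → ℝ) (y z : ℝ) (u v : Fin 3 → ℝ) : ℝ :=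
  u 0 * v 2 + u 2 * v 0 + ε * u 1 * v 1 + f y z * u 2 * v 2

/-- The covariant derivative `∇_{γ'} ξ` along a curve `γ` in the strict Walker
3-manifold. -/
noncomputable def covD (ε : ℝ) (fy fz : ℝ → ℝ → ℝ) (γ ξ : ℝ → Fin 3 → ℝ) (t : ℝ) :
    Fin 3 → ℝ :=
  ![deriv (fun s => ξ s 0) t
      + (1 / 2) * fy (γ t 1) (γ t 2) *
        (ξ t 1 * deriv (fun s => γ s 2) t + ξ t 2 * deriv (fun s => γ s 1) t)
      + (1 / 2) * fz (γ t 1) (γ t 2) * ξ t 2 * deriv (fun s => γ s 2) t,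
    deriv (fun s => ξ s 1) t
      - (ε / 2) * fy (γ t 1) (γ t 2) * ξ t 2 * deriv (fun s => γ s 2) t,
    deriv (fun s => ξ s 2) t]

/-- `∇_{Φ_x}Φ_x` for the cylinder `Φ(x, z) = (x, φ(z), z)` (it vanishes). -/
noncomputable def nabXX2 (ε : ℝ) (fy fz : ℝ → ℝ → ℝ) (φ : ℝ → ℝ) (z : ℝ) : Fin 3 → ℝ :=
  covD ε fy fz (fun s => ![s, φ z, z]) (fun _ => ![1, 0, 0]) 0

/-- `∇_{Φ_x}Φ_z` for the cylinder `Φ(x, z) = (x, φ(z), z)` (it vanishes). -/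
noncomputable def nabXZ2 (ε : ℝ) (fy fz : ℝ → ℝ → ℝ) (φ : ℝ → ℝ) (z : ℝ) : Fin 3 → ℝ :=
  covD ε fy fz (fun s => ![s, φ z, z]) (fun _ => ![0, deriv φ z, 1]) 0

/-- `∇_{Φ_z}Φ_x` for the cylinder `Φ(x, z) = (x, φ(z), z)` (it vanishes). -/
noncomputable def nabZX2 (ε : ℝ) (fy fz : ℝ → ℝ → ℝ) (φ : ℝ → ℝ) (z : ℝ) : Fin 3 → ℝ :=
  covD ε fy fz (fun s => ![0, φ s, s]) (fun _ => ![1, 0, 0]) z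

/-- `∇_{Φ_z}Φ_z` for the cylinder `Φ(x, z) = (x, φ(z), z)`. -/
noncomputable def nabZZ2 (ε : ℝ) (fy fz : ℝ → ℝ → ℝ) (φ : ℝ → ℝ) (z : ℝ) : Fin 3 → ℝ :=
  covD ε fy fz (fun s => ![0, φ s, s]) (fun s => ![0, deriv φ s, 1]) z

lemma nabXX2_eq (ε : ℝ) (fy fz : ℝ → ℝ → ℝ) (φ : ℝ → ℝ) (z : ℝ) :
    nabXX2 ε fy fz φ z = ![0, 0, 0] := by
  simp [nabXX2, covD]

lemma nabXZ2_eq (ε : ℝ) (fy fz : ℝ → ℝ → ℝ) (φ : ℝ → ℝ) (z : ℝ) :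
    nabXZ2 ε fy fz φ z = ![0, 0, 0] := by
  simp [nabXZ2, covD]

lemma nabZX2_eq (ε : ℝ) (fy fz : ℝ → ℝ → ℝ) (φ : ℝ → ℝ) (z : ℝ) :
    nabZX2 ε fy fz φ z = ![0, 0, 0] := by
  simp [nabZX2, covD]

lemma nabZZ2_eq (ε : ℝ) (fy fz : ℝ → ℝ → ℝ) (φ : ℝ → ℝ) (z : ℝ) :
    nabZZ2 ε fy fz φ z =
      ![deriv φ z * fy (φ z) z + (1/2) * fz (φ z) z,
        deriv (deriv φ) z - (ε/2) * fy (φ z) z, 0] := by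
  simp [nabZZ2, covD]
  ring_nf

/-- For the cylinder `S : Φ(x, z) = (x, φ(z), z)` in `M_f` with unit normal
`η = (φ′(z), −ε, 0)`, one has `g_f(∇_{Φ_z}Φ_z, η) = (ε/2) f_y(φ(z), z) − φ″(z)`;
consequently `S` is totally geodesic, i.e. `g_f(∇_X Y, η) = 0` for all `X, Y` in the
span of `(Φ_x, Φ_z)`, if and only if `(ε/2) f_y(φ(z), z) − φ″(z) = 0` for all `z`. -/
theorem stmt_15 (ε : ℝ) (hε : ε = 1 ∨ ε = -1) (f fy fz : ℝ → ℝ → ℝ)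
    (hf : ContDiff ℝ (⊤ : ℕ∞) (Function.uncurry f))
    (hfy : ∀ y z : ℝ, HasDerivAt (fun t => f t z) (fy y z) y)
    (hfz : ∀ y z : ℝ, HasDerivAt (fun t => f y t) (fz y z) z)
    (φ : ℝ → ℝ) (hφ : ContDiff ℝ (⊤ : ℕ∞) φ) :
    (∀ z : ℝ,
      gf ε f (φ z) z (nabZZ2 ε fy fz φ z) ![deriv φ z, -ε, 0] =
        (ε / 2) * fy (φ z) z - deriv (deriv φ) z) ∧
    ((∀ z a b c d : ℝ,
        gf ε f (φ z) z
          ((a * c) • nabXX2 ε fy fz φ z + (a * d) • nabXZ2 ε fy fz φ z +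
            (b * c) • nabZX2 ε fy fz φ z + (b * d) • nabZZ2 ε fy fz φ z)
          ![deriv φ z, -ε, 0] = 0) ↔
      (∀ z : ℝ, (ε / 2) * fy (φ z) z - deriv (deriv φ) z = 0)) := by
  have key : ∀ z : ℝ,
      gf ε f (φ z) z (nabZZ2 ε fy fz φ z) ![deriv φ z, -ε, 0] =
        (ε / 2) * fy (φ z) z - deriv (deriv φ) z := by
    intro z
    rw [nabZZ2_eq]
    rcases hε with h | h <;> simp [gf, h] <;> ring
  refine ⟨key, ?_⟩
  have key2 : ∀ z a b c d : ℝ,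
      gf ε f (φ z) z
        ((a * c) • nabXX2 ε fy fz φ z + (a * d) • nabXZ2 ε fy fz φ z +
          (b * c) • nabZX2 ε fy fz φ z + (b * d) • nabZZ2 ε fy fz φ z)
        ![deriv φ z, -ε, 0] =
      (b * d) * ((ε / 2) * fy (φ z) z - deriv (deriv φ) z) := by
    intro z a b c d
    rw [← key z, nabXX2_eq, nabXZ2_eq, nabZX2_eq, nabZZ2_eq]
    simp [gf]
    ring
  constructor
  · intro h z
    have := h z 0 1 0 1
    rw [key2] at this
    linarith
  · intro h z a b c d
    rw [key2, h z, mul_zero]
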